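/- arXiv:0902.0106 — 6 statements merged into one kernel-verified Lean document; each statement's English description precedes it below -/
import Mathlib

section
/- If X is an infinite compact metric space and f : X → X is continuous, transitive, and has a dense set of periodic points, then f is sensitive to initial conditions: there exists δ > 0 such that for every x ∈ X and every neighborhood V of x there exist y ∈ V and n ≥ 0 with d(fⁿ(x), fⁿ(y)) > δ. -/
open TopologicalSpace

/-- The induced map on the hyperspace of nonempty compact subsets. -/
def barMap {X : Type*} [TopologicalSpace X] (f : X → X) (hf : Continuous f) :
    NonemptyCompacts X → NonemptyCompacts X :=
  fun A => ⟨⟨f '' A, A.isCompact.image hf⟩, A.nonempty.image f⟩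

/-- Topological transitivity. -/
def IsTransitive {X : Type*} [TopologicalSpace X] (f : X → X) : Prop :=
  ∀ U V : Set X, IsOpen U → IsOpen V → U.Nonempty → V.Nonempty →
    ∃ n : ℕ, (f^[n] '' U ∩ V).Nonempty

/-- Topological mixing. -/
def IsMixing {X : Type*} [TopologicalSpace X] (f : X → X) : Prop :=
  ∀ U V : Set X, IsOpen U → IsOpen V → U.Nonempty → V.Nonempty →
    ∃ N : ℕ, ∀ n ≥ N, (f^[n] '' U ∩ V).Nonempty

/-- Weak mixing: `f × f` is transitive. -/
def IsWeaklyMixing {X : Type*} [TopologicalSpace X] (f : X → X) : Prop :=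
  IsTransitive (fun p : X × X => (f p.1, f p.2))

/-- The set of periodic points. -/
def Periodics {X : Type*} (f : X → X) : Set X := {x | ∃ n ≥ 1, f^[n] x = x}

/-- Banks et al.: transitivity + dense periodic points imply sensitivity on an
infinite compact metric space. -/
theorem transitive_densePeriodic_sensitive
    {X : Type*} [MetricSpace X] [CompactSpace X] [Infinite X]
    (f : X → X) (hf : Continuous f)
    (htrans : IsTransitive f)
    (hper : Dense (Periodics f)) :
    ∃ δ : ℝ, 0 < δ ∧ ∀ x : X, ∀ V ∈ nhds x,
      ∃ y ∈ V, ∃ n : ℕ, δ < dist (f^[n] x) (f^[n] y) := by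
  classical
  obtain ⟨p, hp⟩ : (Periodics f).Nonempty := hper.nonempty
  obtain ⟨a, ha1, hpa⟩ := hp
  have hpa' : Function.IsPeriodicPt f a p := hpa
  -- orbit of p
  set Op : Set X := (fun i => f^[i] p) '' (Set.Iio a) with hOpdef
  have hOpfin : Op.Finite := (Set.finite_Iio a).image _
  have hmemOp : ∀ n, f^[n] p ∈ Op := by
    intro n
    exact ⟨n % a, Nat.mod_lt _ ha1, hpa'.iterate_mod_apply n⟩
  -- a periodic point q outside Op
  have hnotsub : ¬ (Periodics f ⊆ Op) := by
    intro hsub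
    have h1 : (Set.univ : Set X) ⊆ closure Op := by
      rw [← hper.closure_eq]; exact closure_mono hsub
    rw [hOpfin.isClosed.closure_eq] at h1
    exact Set.infinite_univ (hOpfin.subset h1)
  obtain ⟨q, hq, hqOp⟩ := Set.not_subset.mp hnotsub
  obtain ⟨b, hb1, hqb⟩ := hq
  have hqb' : Function.IsPeriodicPt f b q := hqb
  -- orbits are disjoint
  have hdisj : ∀ i j : ℕ, f^[i] p ≠ f^[j] q := by
    intro i j hij
    apply hqOp
    have h1 : f^[j * b] q = q := (hqb'.const_mul j).eq
    have h2 : j ≤ j * b := Nat.le_mul_of_pos_right j hb1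
    have h3 : f^[j * b] q = f^[j * b - j] (f^[j] q) := by
      rw [← Function.iterate_add_apply, Nat.sub_add_cancel h2]
    rw [← hij, ← Function.iterate_add_apply] at h3
    rw [← h1, h3]
    exact hmemOp _
  -- positive gap between the two orbits
  obtain ⟨δ₀, hδ₀pos, hgap⟩ : ∃ δ₀ > 0, ∀ i j : ℕ, δ₀ ≤ dist (f^[i] p) (f^[j] q) := by
    set s : Finset ℝ := (Finset.range a ×ˢ Finset.range b).image
      (fun ij => dist (f^[ij.1] p) (f^[ij.2] q)) with hs
    have hsne : s.Nonempty :=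
      Finset.image_nonempty.mpr (Finset.nonempty_product.mpr
        ⟨⟨0, Finset.mem_range.mpr ha1⟩, ⟨0, Finset.mem_range.mpr hb1⟩⟩)
    refine ⟨s.min' hsne, ?_, ?_⟩
    · obtain ⟨ij, _, hij⟩ := Finset.mem_image.mp (s.min'_mem hsne)
      rw [← hij]
      exact dist_pos.mpr (hdisj _ _)
    · intro i j
      rw [← hpa'.iterate_mod_apply i, ← hqb'.iterate_mod_apply j]
      exact Finset.min'_le _ _ (Finset.mem_image.mpr ⟨(i % a, j % b),
        Finset.mem_product.mpr ⟨Finset.mem_range.mpr (Nat.mod_lt _ ha1),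
          Finset.mem_range.mpr (Nat.mod_lt _ hb1)⟩, rfl⟩)
  set δ : ℝ := δ₀ / 8 with hδdef
  have hδpos : 0 < δ := by positivity
  refine ⟨δ, hδpos, ?_⟩
  intro x V hV
  -- a far periodic point r : for all i, 4δ ≤ dist x (f^[i] r)
  obtain ⟨r, c, hc1, hrper, hrfar⟩ :
      ∃ r c, 1 ≤ c ∧ Function.IsPeriodicPt f c r ∧ ∀ i, 4 * δ ≤ dist x (f^[i] r) := by
    by_cases h : ∃ i, dist x (f^[i] p) < 4 * δ
    · obtain ⟨i, hi⟩ := h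
      refine ⟨q, b, hb1, hqb', fun j => ?_⟩
      have h1 : δ₀ ≤ dist (f^[i] p) (f^[j] q) := hgap i j
      have h2 : dist (f^[i] p) (f^[j] q) ≤ dist x (f^[i] p) + dist x (f^[j] q) :=
        dist_triangle_left _ _ _
      have : δ₀ = 8 * δ := by rw [hδdef]; ring
      linarith
    · push_neg at h
      exact ⟨p, a, ha1, hpa', h⟩
  -- the small neighborhood W of x
  obtain ⟨ε, hεpos, hεV⟩ := Metric.mem_nhds_iff.mp hV
  set ε' : ℝ := min ε δ with hε'def
  have hε'pos : 0 < ε' := lt_min hεpos hδpos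
  set W : Set X := Metric.ball x ε' with hWdef
  have hWopen : IsOpen W := Metric.isOpen_ball
  have hWne : W.Nonempty := ⟨x, Metric.mem_ball_self hε'pos⟩
  have hWV : W ⊆ V := fun y hy => hεV (Metric.ball_subset_ball (min_le_left _ _) hy)
  have hWδ : ∀ y ∈ W, dist x y < δ := fun y hy =>
    lt_of_lt_of_le (by rw [dist_comm]; exact hy) (min_le_right _ _)
  -- a periodic point p' in W
  obtain ⟨p', hp'per, hp'W⟩ := hper.exists_mem_open hWopen hWne
  obtain ⟨m, hm1, hpm⟩ := hp'per
  have hpm' : Function.IsPeriodicPt f m p' := hpm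
  -- the open set U around r
  set U : Set X := ⋂ i ∈ Finset.range (m + 1), f^[i] ⁻¹' (Metric.ball (f^[i] r) δ)
    with hUdef
  have hUopen : IsOpen U := by
    refine isOpen_biInter_finset fun i _ => ?_
    exact (Metric.isOpen_ball).preimage (hf.iterate i)
  have hUne : U.Nonempty := by
    refine ⟨r, ?_⟩
    simp only [hUdef, Set.mem_iInter, Set.mem_preimage]
    intro i _
    exact Metric.mem_ball_self hδpos
  -- transitivity
  obtain ⟨n, w, hw⟩ := htrans W U hWopen hUopen hWne hUne
  obtain ⟨⟨z, hzW, hzn⟩, hwU⟩ := hw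
  rw [← hzn] at hwU
  -- k = m * (n / m + 1)
  set k : ℕ := m * (n / m + 1) with hkdef
  have hk0 : k = m * (n / m) + m := by rw [hkdef]; ring
  have hk1 := Nat.div_add_mod n m
  have hk2 : n % m < m := Nat.mod_lt _ hm1
  have hnk : n ≤ k := by omega
  have hkn : k - n ≤ m := by omega
  have hkp' : f^[k] p' = p' := (hpm'.mul_const _).eq
  have hkz : f^[k] z = f^[k - n] (f^[n] z) := by
    rw [← Function.iterate_add_apply, Nat.sub_add_cancel hnk]
  have hzball : dist (f^[k] z) (f^[k - n] r) < δ := by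
    have := Set.mem_iInter.mp hwU (k - n)
    have h2 := Set.mem_iInter.mp this (Finset.mem_range.mpr (Nat.lt_succ_of_le hkn))
    rw [hkz]
    exact h2
  -- key estimate
  have hfar : 4 * δ ≤ dist x (f^[k - n] r) := hrfar _
  have hp'x : dist x p' < δ := hWδ p' hp'W
  have hkey : 2 * δ < dist p' (f^[k] z) := by
    have h1 : dist x (f^[k - n] r) ≤
        dist x p' + dist p' (f^[k] z) + dist (f^[k] z) (f^[k - n] r) :=
      dist_triangle4 _ _ _ _
    linarith
  have htri : dist p' (f^[k] z) ≤ dist (f^[k] x) (f^[k] p') + dist (f^[k] x) (f^[k] z) := by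
    rw [hkp']
    exact dist_triangle_left _ _ _
  rcases lt_or_ge δ (dist (f^[k] x) (f^[k] p')) with hcase | hcase
  · exact ⟨p', hWV hp'W, k, hcase⟩
  · exact ⟨z, hWV hzW, k, by linarith⟩
end

section
/- Let (X,d) be a compact metric space, f : X → X continuous, and let f̄ : K(X) → K(X) be the induced map A ↦ f(A) on the hyperspace K(X) of nonempty compact subsets with the Hausdorff metric. If f̄ is transitive, then f is transitive. -/
open TopologicalSpace

lemma barMap_iterate_coe {X : Type*} [TopologicalSpace X] (f : X → X) (hf : Continuous f)
    (A : NonemptyCompacts X) (n : ℕ) :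
    (((barMap f hf)^[n] A : NonemptyCompacts X) : Set X) = f^[n] '' (A : Set X) := by
  induction n with
  | zero => simp
  | succ n ih =>
    rw [Function.iterate_succ_apply']
    show f '' (((barMap f hf)^[n] A : NonemptyCompacts X) : Set X) = _
    rw [ih, ← Set.image_comp, Function.iterate_succ' f n]

/-- If the induced hyperspace map is transitive then the base map is transitive. -/
theorem base_transitive_of_hyper_transitive
    {X : Type*} [MetricSpace X] [CompactSpace X]
    (f : X → X) (hf : Continuous f)
    (h : IsTransitive (barMap f hf)) : IsTransitive f := by
  intro U V hU hV ⟨x, hx⟩ ⟨y, hy⟩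
  -- hyperspace open sets
  set 𝒰 : Set (NonemptyCompacts X) := {A | (A : Set X) ⊆ U} with h𝒰
  set 𝒱 : Set (NonemptyCompacts X) := {A | ((A : Set X) ∩ V).Nonempty} with h𝒱
  have hedist : ∀ A B : NonemptyCompacts X,
      EMetric.hausdorffEdist (A : Set X) (B : Set X) ≠ ⊤ := by
    intro A B
    exact Metric.hausdorffEdist_ne_top_of_nonempty_of_bounded A.nonempty B.nonempty
      A.isCompact.isBounded B.isCompact.isBounded
  have open𝒰 : IsOpen 𝒰 := by
    rw [Metric.isOpen_iff]
    intro A hA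
    obtain ⟨ε, hε, hthick⟩ := A.isCompact.exists_thickening_subset_open hU hA
    refine ⟨ε, hε, fun B hB => ?_⟩
    intro b hb
    rw [Metric.mem_ball, Metric.NonemptyCompacts.dist_eq] at hB
    obtain ⟨a, ha, hab⟩ := Metric.exists_dist_lt_of_hausdorffDist_lt hb hB (hedist B A)
    exact hthick (Metric.mem_thickening_iff.2 ⟨a, ha, hab⟩)
  have open𝒱 : IsOpen 𝒱 := by
    rw [Metric.isOpen_iff]
    intro A hA
    obtain ⟨z, hzA, hzV⟩ := hA
    obtain ⟨ε, hε, hball⟩ := Metric.isOpen_iff.1 hV z hzV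
    refine ⟨ε, hε, fun B hB => ?_⟩
    rw [Metric.mem_ball, Metric.NonemptyCompacts.dist_eq] at hB
    obtain ⟨b, hb, hzb⟩ := Metric.exists_dist_lt_of_hausdorffDist_lt' hzA hB (hedist B A)
    exact ⟨b, hb, hball (by simpa [Metric.mem_ball, dist_comm] using hzb)⟩
  have ne𝒰 : 𝒰.Nonempty := ⟨⟨⟨{x}, isCompact_singleton⟩, Set.singleton_nonempty x⟩,
    by simpa [h𝒰] using hx⟩
  have ne𝒱 : 𝒱.Nonempty := ⟨⟨⟨{y}, isCompact_singleton⟩, Set.singleton_nonempty y⟩,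
    ⟨y, by simp [hy]⟩⟩
  obtain ⟨n, B, ⟨A, hAU, hAB⟩, hBV⟩ := h 𝒰 𝒱 open𝒰 open𝒱 ne𝒰 ne𝒱
  obtain ⟨z, hzB, hzV⟩ := hBV
  rw [← hAB, barMap_iterate_coe] at hzB
  obtain ⟨a, haA, haz⟩ := hzB
  exact ⟨n, z, ⟨a, hAU haA, haz⟩, hzV⟩
end

section
/- Let X be a compact metric space, f : X → X continuous, and f̄ the induced map on the hyperspace K(X). Then f is weakly mixing if and only if f̄ is weakly mixing, and these are equivalent to f̄ being transitive. -/
open TopologicalSpace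

/-!
Write `N(U, V)` (`hittingTimes f U V`) for the set of times `n` with `fⁿ(U) ∩ V ≠ ∅`. If `f` is
weakly mixing, Furstenberg's lemma `N(U₁ ∩ f⁻ⁿU₂, V₁ ∩ f⁻ⁿV₂) ⊆ N(U₁, V₁) ∩ N(U₂, V₂)`, for a
suitable `n`, shows that finitely many sets `N(Uᵢ, Vⱼ)` always share a time `n`. For such an `n`,
points `xᵢⱼ ∈ Uᵢ` with `fⁿ xᵢⱼ ∈ Vⱼ` form a finite set lying in the Vietoris basic set
`⟨U₁, …, Uₖ⟩` whose image under `f̄ⁿ` lies in `⟨V₁, …, Vₗ⟩`; so `f̄` is weakly mixing, hence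
transitive. Conversely, transitivity of `f̄` from `{K ⊆ U}` to `{K meets V₁ and V₂}` gives
`N(U, V₁) ∩ N(U, V₂) ≠ ∅` for all nonempty open `U, V₁, V₂`, and applying this twice yields weak
mixing of `f`.
-/

open Set

section HittingTimes

variable {X : Type*} {f : X → X}

def hittingTimes (f : X → X) (U V : Set X) : Set ℕ := {n | (f^[n] '' U ∩ V).Nonempty}

theorem mem_hittingTimes_iff {U V : Set X} {n : ℕ} :
    n ∈ hittingTimes f U V ↔ (U ∩ f^[n] ⁻¹' V).Nonempty :=
  image_inter_nonempty_iff

theorem hittingTimes_mono {U U' V V' : Set X} (hU : U ⊆ U') (hV : V ⊆ V') :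
    hittingTimes f U V ⊆ hittingTimes f U' V' :=
  fun _ hn => hn.mono (inter_subset_inter (image_mono hU) hV)

theorem hittingTimes_preimage_iterate_subset (m : ℕ) (U V : Set X) :
    hittingTimes f (f^[m] ⁻¹' U) (f^[m] ⁻¹' V) ⊆ hittingTimes f U V := by
  rintro n ⟨-, ⟨x, hxU, rfl⟩, hxV⟩
  refine ⟨f^[n] (f^[m] x), mem_image_of_mem _ hxU, ?_⟩
  rwa [← (Function.Commute.iterate_iterate_self f m n).eq]

variable [TopologicalSpace X]

def nonemptyOpenPairs (X : Type*) [TopologicalSpace X] : Set (Set X × Set X) :=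
  {p | IsOpen p.1 ∧ IsOpen p.2 ∧ p.1.Nonempty ∧ p.2.Nonempty}

theorem IsTransitive.hittingTimes_nonempty (h : IsTransitive f) {p : Set X × Set X}
    (hp : p ∈ nonemptyOpenPairs X) : (hittingTimes f p.1 p.2).Nonempty :=
  h p.1 p.2 hp.1 hp.2.1 hp.2.2.1 hp.2.2.2

end HittingTimes

section WeakMixing

variable {X : Type*} [TopologicalSpace X] {f : X → X}

theorem isWeaklyMixing_iff :
    IsWeaklyMixing f ↔ ∀ p ∈ nonemptyOpenPairs X, ∀ q ∈ nonemptyOpenPairs X,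
      (hittingTimes f p.1 p.2 ∩ hittingTimes f q.1 q.2).Nonempty := by
  change IsTransitive (Prod.map f f) ↔ _
  constructor
  · rintro h ⟨U₁, V₁⟩ ⟨hU₁, hV₁, hU₁', hV₁'⟩ ⟨U₂, V₂⟩ ⟨hU₂, hV₂, hU₂', hV₂'⟩
    obtain ⟨n, -, ⟨x, hx, rfl⟩, hxV⟩ :=
      h _ _ (hU₁.prod hU₂) (hV₁.prod hV₂) (hU₁'.prod hU₂') (hV₁'.prod hV₂')
    rw [Prod.map_iterate] at hxV
    exact ⟨n, ⟨_, mem_image_of_mem _ hx.1, hxV.1⟩, ⟨_, mem_image_of_mem _ hx.2, hxV.2⟩⟩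
  · intro h O O' hO hO' ⟨⟨a₁, a₂⟩, ha⟩ ⟨⟨b₁, b₂⟩, hb⟩
    obtain ⟨U₁, U₂, hU₁, hU₂, ha₁, ha₂, hUO⟩ := isOpen_prod_iff.1 hO a₁ a₂ ha
    obtain ⟨V₁, V₂, hV₁, hV₂, hb₁, hb₂, hVO'⟩ := isOpen_prod_iff.1 hO' b₁ b₂ hb
    obtain ⟨n, ⟨-, ⟨x₁, hx₁, rfl⟩, hx₁V⟩, ⟨-, ⟨x₂, hx₂, rfl⟩, hx₂V⟩⟩ :=
      h (U₁, V₁) ⟨hU₁, hV₁, ⟨a₁, ha₁⟩, ⟨b₁, hb₁⟩⟩ (U₂, V₂) ⟨hU₂, hV₂, ⟨a₂, ha₂⟩, ⟨b₂, hb₂⟩⟩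
    exact ⟨n, (f^[n] x₁, f^[n] x₂), ⟨(x₁, x₂), hUO ⟨hx₁, hx₂⟩, by rw [Prod.map_iterate]; rfl⟩,
      hVO' ⟨hx₁V, hx₂V⟩⟩

theorem IsWeaklyMixing.isTransitive (h : IsWeaklyMixing f) : IsTransitive f := by
  intro U V hU hV hU' hV'
  have hp : (U, V) ∈ nonemptyOpenPairs X := ⟨hU, hV, hU', hV'⟩
  obtain ⟨n, hn, -⟩ := isWeaklyMixing_iff.1 h _ hp _ hp
  exact ⟨n, hn⟩

/-- Furstenberg's intersection lemma. -/
theorem IsWeaklyMixing.exists_hittingTimes_subset_inter (hf : Continuous f)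
    (h : IsWeaklyMixing f) {p q : Set X × Set X} (hp : p ∈ nonemptyOpenPairs X)
    (hq : q ∈ nonemptyOpenPairs X) :
    ∃ r ∈ nonemptyOpenPairs X,
      hittingTimes f r.1 r.2 ⊆ hittingTimes f p.1 p.2 ∩ hittingTimes f q.1 q.2 := by
  obtain ⟨n, hn₁, hn₂⟩ :=
    isWeaklyMixing_iff.1 h (p.1, q.1) ⟨hp.1, hq.1, hp.2.2.1, hq.2.2.1⟩
      (p.2, q.2) ⟨hp.2.1, hq.2.1, hp.2.2.2, hq.2.2.2⟩
  refine ⟨(p.1 ∩ f^[n] ⁻¹' q.1, p.2 ∩ f^[n] ⁻¹' q.2),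
    ⟨hp.1.inter (hq.1.preimage (hf.iterate n)), hp.2.1.inter (hq.2.1.preimage (hf.iterate n)),
      mem_hittingTimes_iff.1 hn₁, mem_hittingTimes_iff.1 hn₂⟩,
    fun m hm => ⟨?_, ?_⟩⟩
  · exact hittingTimes_mono inter_subset_left inter_subset_left hm
  · exact hittingTimes_preimage_iterate_subset n _ _
      (hittingTimes_mono inter_subset_right inter_subset_right hm)

theorem IsWeaklyMixing.biInter_hittingTimes_nonempty (hf : Continuous f) (h : IsWeaklyMixing f)
    {P : Set (Set X × Set X)} (hP : P.Finite) (hPo : P ⊆ nonemptyOpenPairs X) :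
    (⋂ p ∈ P, hittingTimes f p.1 p.2).Nonempty := by
  rcases P.eq_empty_or_nonempty with rfl | ⟨p₀, hp₀⟩
  · simp
  -- Starting from `p₀`, refine by Furstenberg's lemma one member of `P` at a time.
  have refined : ∀ Q ⊆ P, Q.Finite → ∃ r ∈ nonemptyOpenPairs X,
      hittingTimes f r.1 r.2 ⊆ ⋂ p ∈ Q, hittingTimes f p.1 p.2 := by
    intro Q hQP hQ
    induction Q, hQ using Set.Finite.induction_on with
    | empty => exact ⟨p₀, hPo hp₀, by simp⟩
    | @insert q Q _ _ ih =>
      obtain ⟨r, hr, hrQ⟩ := ih ((subset_insert q Q).trans hQP)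
      obtain ⟨s, hs, hsrq⟩ := h.exists_hittingTimes_subset_inter hf hr (hPo (hQP (mem_insert q Q)))
      refine ⟨s, hs, fun n hn => ?_⟩
      rw [biInter_insert]
      exact ⟨(hsrq hn).2, hrQ (hsrq hn).1⟩
  obtain ⟨r, hr, hrP⟩ := refined P subset_rfl hP
  exact (h.isTransitive.hittingTimes_nonempty hr).mono hrP

theorem isWeaklyMixing_of_hittingTimes_inter_nonempty (hf : Continuous f)
    (h : ∀ U V₁ V₂ : Set X, IsOpen U → IsOpen V₁ → IsOpen V₂ → U.Nonempty → V₁.Nonempty →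
      V₂.Nonempty → (hittingTimes f U V₁ ∩ hittingTimes f U V₂).Nonempty) :
    IsWeaklyMixing f := by
  refine isWeaklyMixing_iff.2 ?_
  rintro ⟨U₁, V₁⟩ ⟨hU₁, hV₁, hU₁', hV₁'⟩ ⟨U₂, V₂⟩ ⟨hU₂, hV₂, hU₂', hV₂'⟩
  obtain ⟨m, hmU, hmV⟩ := h U₁ U₂ V₂ hU₁ hU₂ hV₂ hU₁' hU₂' hV₂'
  -- Moving `U₂` and `V₂` back by `f^[m]` puts both targets in reach of the one source `U₁`.
  obtain ⟨n, hn₁, hn₂⟩ := h (U₁ ∩ f^[m] ⁻¹' U₂) V₁ (f^[m] ⁻¹' V₂)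
    (hU₁.inter (hU₂.preimage (hf.iterate m))) hV₁ (hV₂.preimage (hf.iterate m))
    (mem_hittingTimes_iff.1 hmU) hV₁' ((mem_hittingTimes_iff.1 hmV).mono inter_subset_right)
  exact ⟨n, hittingTimes_mono inter_subset_left subset_rfl hn₁,
    hittingTimes_preimage_iterate_subset m U₂ V₂
      (hittingTimes_mono inter_subset_right subset_rfl hn₂)⟩

end WeakMixing

section Hyperspace

variable {X : Type*} [TopologicalSpace X] {f : X → X}

theorem coe_barMap_iterate (hf : Continuous f) (n : ℕ) (A : NonemptyCompacts X) :
    ((barMap f hf)^[n] A : Set X) = f^[n] '' A := by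
  induction n with
  | zero => simp
  | succ n ih =>
    rw [Function.iterate_succ_apply', Function.iterate_succ', image_comp, ← ih]
    rfl

/-- The basic open set `⟨U₁, …, Uₖ⟩` of the Vietoris topology, for `u = {U₁, …, Uₖ}`. -/
def vietorisBasic (u : Set (Set X)) : Set (NonemptyCompacts X) :=
  {K | (K : Set X) ⊆ ⋃₀ u ∧ ∀ U ∈ u, ((K : Set X) ∩ U).Nonempty}

theorem hittingTimes_subset_hittingTimes_barMap_vietorisBasic (hf : Continuous f)
    {u v : Set (Set X)} (hu : u.Finite) (hv : v.Finite) (hu' : u.Nonempty) (hv' : v.Nonempty) :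
    ⋂ p ∈ u ×ˢ v, hittingTimes f p.1 p.2 ⊆
      hittingTimes (barMap f hf) (vietorisBasic u) (vietorisBasic v) := by
  intro n hn
  simp only [mem_iInter, mem_prod] at hn
  have : ∀ p : u × v, ∃ x ∈ (p.1 : Set X), f^[n] x ∈ (p.2 : Set X) := fun p =>
    mem_hittingTimes_iff.1 (hn (p.1, p.2) ⟨p.1.2, p.2.2⟩)
  choose x hxu hxv using this
  have := hu.to_subtype
  have := hv.to_subtype
  obtain ⟨U₀, hU₀⟩ := hu'
  obtain ⟨V₀, hV₀⟩ := hv'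
  let K : NonemptyCompacts X :=
    ⟨⟨range x, (finite_range x).isCompact⟩, range_nonempty_iff_nonempty.2 ⟨(⟨U₀, hU₀⟩, ⟨V₀, hV₀⟩)⟩⟩
  refine ⟨(barMap f hf)^[n] K, ⟨K, ⟨?_, ?_⟩, rfl⟩, ?_, ?_⟩
  · rintro _ ⟨p, rfl⟩
    exact mem_sUnion_of_mem (hxu p) p.1.2
  · exact fun U hU => ⟨x (⟨U, hU⟩, ⟨V₀, hV₀⟩), mem_range_self _, hxu (⟨U, hU⟩, ⟨V₀, hV₀⟩)⟩
  · rw [coe_barMap_iterate]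
    rintro _ ⟨_, ⟨p, rfl⟩, rfl⟩
    exact mem_sUnion_of_mem (hxv p) p.2.2
  · intro V hV
    rw [coe_barMap_iterate]
    exact ⟨_, mem_image_of_mem _ (mem_range_self _), hxv (⟨U₀, hU₀⟩, ⟨V, hV⟩)⟩

theorem exists_biInter_hittingTimes_subset_hittingTimes_barMap (hf : Continuous f)
    {𝒰 𝒱 : Set (NonemptyCompacts X)} (h𝒰 : IsOpen 𝒰) (h𝒱 : IsOpen 𝒱)
    (h𝒰' : 𝒰.Nonempty) (h𝒱' : 𝒱.Nonempty) :
    ∃ P ⊆ nonemptyOpenPairs X, P.Finite ∧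
      ⋂ p ∈ P, hittingTimes f p.1 p.2 ⊆ hittingTimes (barMap f hf) 𝒰 𝒱 := by
  have basic : ∀ {𝒲 : Set (NonemptyCompacts X)}, IsOpen 𝒲 → 𝒲.Nonempty →
      ∃ u : Set (Set X), u.Finite ∧ u.Nonempty ∧ (∀ U ∈ u, IsOpen U ∧ U.Nonempty) ∧
        vietorisBasic u ⊆ 𝒲 := by
    rintro 𝒲 h𝒲 ⟨A, hA⟩
    obtain ⟨_, ⟨u, ⟨hu, hu', huo⟩, rfl⟩, hAu, hu𝒲⟩ :=
      NonemptyCompacts.isTopologicalBasis.exists_subset_of_mem_open hA h𝒲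
    exact ⟨u, hu, hu', fun U hU => ⟨huo U hU, (hAu.2 U hU).mono inter_subset_right⟩, hu𝒲⟩
  obtain ⟨u, hu, hu', huo, hu𝒰⟩ := basic h𝒰 h𝒰'
  obtain ⟨v, hv, hv', hvo, hv𝒱⟩ := basic h𝒱 h𝒱'
  refine ⟨u ×ˢ v, ?_, hu.prod hv, ?_⟩
  · rintro ⟨U, V⟩ ⟨hU, hV⟩
    exact ⟨(huo U hU).1, (hvo V hV).1, (huo U hU).2, (hvo V hV).2⟩
  · exact (hittingTimes_subset_hittingTimes_barMap_vietorisBasic hf hu hv hu' hv').trans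
      (hittingTimes_mono hu𝒰 hv𝒱)

theorem IsWeaklyMixing.barMap (hf : Continuous f) (h : IsWeaklyMixing f) :
    IsWeaklyMixing (barMap f hf) := by
  refine isWeaklyMixing_iff.2 fun p hp q hq => ?_
  obtain ⟨P, hPo, hP, hPp⟩ :=
    exists_biInter_hittingTimes_subset_hittingTimes_barMap hf hp.1 hp.2.1 hp.2.2.1 hp.2.2.2
  obtain ⟨Q, hQo, hQ, hQq⟩ :=
    exists_biInter_hittingTimes_subset_hittingTimes_barMap hf hq.1 hq.2.1 hq.2.2.1 hq.2.2.2
  obtain ⟨n, hn⟩ := h.biInter_hittingTimes_nonempty hf (hP.union hQ) (union_subset hPo hQo)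
  rw [biInter_union] at hn
  exact ⟨n, hPp hn.1, hQq hn.2⟩

theorem IsTransitive.hittingTimes_inter_nonempty_of_barMap (hf : Continuous f)
    (h : IsTransitive (barMap f hf)) {U V₁ V₂ : Set X} (hU : IsOpen U) (hV₁ : IsOpen V₁)
    (hV₂ : IsOpen V₂) (hU' : U.Nonempty) (hV₁' : V₁.Nonempty) (hV₂' : V₂.Nonempty) :
    (hittingTimes f U V₁ ∩ hittingTimes f U V₂).Nonempty := by
  obtain ⟨u, hu⟩ := hU'
  obtain ⟨w₁, hw₁⟩ := hV₁'
  obtain ⟨w₂, hw₂⟩ := hV₂'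
  obtain ⟨n, -, ⟨A, hAU, rfl⟩, hAV₁, hAV₂⟩ :=
    h {A | (A : Set X) ⊆ U}
      ({A | ((A : Set X) ∩ V₁).Nonempty} ∩ {A | ((A : Set X) ∩ V₂).Nonempty})
      (NonemptyCompacts.isOpen_subsets_of_isOpen hU)
      ((NonemptyCompacts.isOpen_inter_nonempty_of_isOpen hV₁).inter
        (NonemptyCompacts.isOpen_inter_nonempty_of_isOpen hV₂))
      ⟨{u}, by simpa using hu⟩
      ⟨{w₁} ⊔ {w₂}, ⟨w₁, by simp, hw₁⟩, ⟨w₂, by simp, hw₂⟩⟩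
  rw [mem_ofPred_eq, coe_barMap_iterate] at hAV₁ hAV₂
  exact ⟨n, hittingTimes_mono hAU subset_rfl hAV₁, hittingTimes_mono hAU subset_rfl hAV₂⟩

end Hyperspace

theorem weaklyMixing_iff_hyper_general
    {X : Type*} [MetricSpace X]
    (f : X → X) (hf : Continuous f) :
    (IsWeaklyMixing f ↔ IsWeaklyMixing (barMap f hf)) ∧
    (IsWeaklyMixing f ↔ IsTransitive (barMap f hf)) := by
  have of_bar : IsTransitive (barMap f hf) → IsWeaklyMixing f := fun h =>
    isWeaklyMixing_of_hittingTimes_inter_nonempty hf fun _ _ _ =>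
      h.hittingTimes_inter_nonempty_of_barMap hf
  exact ⟨⟨IsWeaklyMixing.barMap hf, fun h => of_bar h.isTransitive⟩,
    ⟨fun h => (h.barMap hf).isTransitive, of_bar⟩⟩

/--  weakly mixing ↔  weakly mixing ↔  transitive. -/
theorem weaklyMixing_iff_hyper
    {X : Type*} [MetricSpace X] [CompactSpace X]
    (f : X → X) (hf : Continuous f) :
    (IsWeaklyMixing f ↔ IsWeaklyMixing (barMap f hf)) ∧
    (IsWeaklyMixing f ↔ IsTransitive (barMap f hf)) :=
  weaklyMixing_iff_hyper_general f hf
end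

section
/- With X a nontrivial minimal mixing subshift of Σ₂ and X̃ ⊆ Σ₃ its extension (the closure of ∪_{b∈X} X_b, where X_b consists of sequences obtained from b by inserting the symbol 2 at infinitely many positions while keeping the symbols of b in order), the subshift (X̃, σ) is topologically mixing. -/
open TopologicalSpace

/-- The shift map on the full shift over k symbols. -/
def shiftMap {k : ℕ} : (ℕ → Fin k) → (ℕ → Fin k) := fun x n => x (n + 1)

/-- A finite word is admissible in Y if it occurs in some element of Y. -/
def AdmissibleIn {k : ℕ} (Y : Set (ℕ → Fin k)) (u : List (Fin k)) : Prop :=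
  ∃ y ∈ Y, ∃ i : ℕ, ∀ l : ℕ, ∀ h : l < u.length, y (i + l) = u.get ⟨l, h⟩

/-- A nonempty closed invariant set with no proper nonempty closed invariant subset. -/
def IsMinimalSet {X : Type*} [TopologicalSpace X] (f : X → X) (A : Set X) : Prop :=
  A.Nonempty ∧ IsClosed A ∧ Set.MapsTo f A A ∧
    ∀ B ⊆ A, B.Nonempty → IsClosed B → Set.MapsTo f B B → B = A

/-- Topological mixing of the subsystem on an invariant subset Y, phrased with
relatively open sets. -/
def SubMixing {X : Type*} [TopologicalSpace X] (f : X → X) (Y : Set X) : Prop :=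
  ∀ U V : Set X, IsOpen U → IsOpen V → (U ∩ Y).Nonempty → (V ∩ Y).Nonempty →
    ∃ N : ℕ, ∀ n ≥ N, ∃ y ∈ U ∩ Y, f^[n] y ∈ V

/-- The embedding of the 2-symbol alphabet into the 3-symbol alphabet. -/
def emb23 : Fin 2 → Fin 3 := fun b => ⟨b.val, by omega⟩

/-- The extension of b in Σ₃: sequences obtained from b by inserting the symbol 2
at the remaining positions, keeping the symbols of b in order along an infinite
increasing sequence of positions. -/
def Xb (b : ℕ → Fin 2) : Set (ℕ → Fin 3) :=
  {x | ∃ n : ℕ → ℕ, StrictMono n ∧ (∀ i, x (n i) = emb23 (b i)) ∧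
        ∀ m, (∀ i, n i ≠ m) → x m = (2 : Fin 3)}

/-- The extension of the subshift X ⊆ Σ₂ inside Σ₃. -/
def Xtilde (X : Set (ℕ → Fin 2)) : Set (ℕ → Fin 3) :=
  closure (⋃ b ∈ X, Xb b)

/-- Iterating the shift map evaluates as a translation. -/
lemma shift_iter {k : ℕ} (n : ℕ) (x : ℕ → Fin k) (t : ℕ) :
    shiftMap^[n] x t = x (t + n) := by
  induction n generalizing x t with
  | zero => rfl
  | succ m ih =>
      rw [Function.iterate_succ_apply, ih]
      show x (t + m + 1) = x (t + (m + 1))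
      rw [Nat.add_assoc]

/-- Cylinder sets are open. -/
lemma isOpen_cyl {k : ℕ} (ξ : ℕ → Fin k) (L : ℕ) :
    IsOpen {η : ℕ → Fin k | ∀ t < L, η t = ξ t} := by
  have h : {η : ℕ → Fin k | ∀ t < L, η t = ξ t} =
      Set.pi ↑(Finset.range L) (fun t => ({ξ t} : Set (Fin k))) := by
    ext η
    simp [Set.mem_pi, Finset.mem_range]
  rw [h]
  exact isOpen_set_pi (Finset.finite_toSet _) (fun i _ => isOpen_discrete _)

/-- Every open set contains a cylinder around each of its points. -/
lemma exists_cyl_subset {k : ℕ} {U : Set (ℕ → Fin k)} (hU : IsOpen U) {ξ : ℕ → Fin k}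
    (hξ : ξ ∈ U) : ∃ L, ∀ η : ℕ → Fin k, (∀ t < L, η t = ξ t) → η ∈ U := by
  obtain ⟨I, u, h1, h2⟩ := isOpen_pi_iff.mp hU ξ hξ
  refine ⟨I.sup id + 1, fun η hη => h2 ?_⟩
  intro i hi
  have hiL : i < I.sup id + 1 := Nat.lt_succ_of_le (Finset.le_sup (f := id) hi)
  rw [hη i hiL]
  exact (h1 i hi).2

/-- For a strictly monotone sequence, the set of indices mapped below L is an
initial segment. -/
lemma count_init {m : ℕ → ℕ} (hm : StrictMono m) (L : ℕ) :
    ∃ r, ∀ i, (m i < L ↔ i < r) := by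
  have hex : ∃ i, L ≤ m i := ⟨L, hm.le_apply⟩
  refine ⟨Nat.find hex, fun i => ⟨fun h => ?_, fun h => ?_⟩⟩
  · by_contra hc
    have h1 := hm.monotone (Nat.le_of_not_lt hc)
    have h2 := Nat.find_spec hex
    omega
  · have := Nat.find_min hex h
    omega

/-- The extension of a nontrivial minimal mixing subshift of Σ₂ inside Σ₃ is
topologically mixing. -/
theorem Xtilde_mixing (X : Set (ℕ → Fin 2))
    (hXc : IsClosed X) (hXi : Set.MapsTo shiftMap X X)
    (hXinf : X.Infinite) (hXmin : IsMinimalSet shiftMap X)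
    (hXmix : SubMixing shiftMap X) :
    SubMixing shiftMap (Xtilde X) := by
  intro U V hU hV hUne hVne
  obtain ⟨ξ, hξU, hξX⟩ := hUne
  obtain ⟨ζ, hζV, hζX⟩ := hVne
  obtain ⟨L, hL⟩ := exists_cyl_subset hU hξU
  obtain ⟨M, hM⟩ := exists_cyl_subset hV hζV
  -- find x in the union agreeing with ξ on [0, L)
  have hξX' : ξ ∈ closure (⋃ b ∈ X, Xb b) := hξX
  obtain ⟨x, hxcyl, hxS⟩ := mem_closure_iff.mp hξX'
    {η : ℕ → Fin 3 | ∀ t < L, η t = ξ t} (isOpen_cyl ξ L) (fun t _ => rfl)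
  have hζX' : ζ ∈ closure (⋃ b ∈ X, Xb b) := hζX
  obtain ⟨z, hzcyl, hzS⟩ := mem_closure_iff.mp hζX'
    {η : ℕ → Fin 3 | ∀ t < M, η t = ζ t} (isOpen_cyl ζ M) (fun t _ => rfl)
  simp only [Set.mem_iUnion] at hxS hzS
  obtain ⟨b, hbX, mx, hmx_mono, hmx_val, hmx_two⟩ := hxS
  obtain ⟨b', hb'X, nz, hnz_mono, hnz_val, hnz_two⟩ := hzS
  -- r = number of b-symbols of x in [0, L), j = number of b'-symbols of z in [0, M)
  obtain ⟨r, hmxL⟩ := count_init hmx_mono L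
  obtain ⟨j, hnzM⟩ := count_init hnz_mono M
  -- apply mixing of X to the cylinders of b|r and b'|j
  obtain ⟨N, hN⟩ := hXmix {y : ℕ → Fin 2 | ∀ t < r, y t = b t}
    {y : ℕ → Fin 2 | ∀ t < j, y t = b' t} (isOpen_cyl b r) (isOpen_cyl b' j)
    ⟨b, fun t _ => rfl, hbX⟩ ⟨b', fun t _ => rfl, hb'X⟩
  obtain ⟨g, hNg, hrg⟩ : ∃ g, N ≤ g ∧ r ≤ g :=
    ⟨max N r, le_max_left _ _, le_max_right _ _⟩
  obtain ⟨y, ⟨hyu, hyX⟩, hyp⟩ := hN g hNg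
  refine ⟨L + (g - r), fun n hn => ?_⟩
  -- construct the witness w ∈ Xb y
  set w : ℕ → Fin 3 := fun m =>
    if m < L then x m
    else if m < L + (g - r) then emb23 (y (m - L + r))
    else if m < n then 2
    else if m < n + M then z (m - n)
    else emb23 (y (g + j + (m - (n + M)))) with hw_def
  set nf : ℕ → ℕ := fun i =>
    if i < r then mx i
    else if i < g then L + (i - r)
    else if i < g + j then n + nz (i - g)
    else n + M + (i - (g + j)) with hnf_def
  have hwXy : w ∈ Xb y := by
    refine ⟨nf, ?_, ?_, ?_⟩
    · apply strictMono_nat_of_lt_succ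
      intro i
      have A : mx i < mx (i + 1) := hmx_mono (Nat.lt_succ_self i)
      have B : r ≤ i ∨ mx i < L := by
        rcases Nat.lt_or_ge i r with h | h
        · exact Or.inr ((hmxL i).mpr h)
        · exact Or.inl h
      have C : j ≤ i - g ∨ nz (i - g) < M := by
        rcases Nat.lt_or_ge (i - g) j with h | h
        · exact Or.inr ((hnzM _).mpr h)
        · exact Or.inl h
      have D : i < g ∨ nz (i - g) < nz (i + 1 - g) := by
        rcases Nat.lt_or_ge i g with h | h
        · exact Or.inl h
        · exact Or.inr (hnz_mono (by omega))
      simp only [hnf_def]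
      split_ifs <;> omega
    · intro i
      simp only [hnf_def]
      split_ifs with c1 c2 c3
      · -- i < r
        have hmxiL : mx i < L := (hmxL i).mpr c1
        simp only [hw_def]
        rw [if_pos hmxiL, hmx_val i, hyu i c1]
      · -- r ≤ i < g
        have h1 : ¬ L + (i - r) < L := by omega
        have h2 : L + (i - r) < L + (g - r) := by omega
        simp only [hw_def]
        rw [if_neg h1, if_pos h2]
        rw [show L + (i - r) - L + r = i by omega]
      · -- g ≤ i < g + j
        have hnzlt : nz (i - g) < M := (hnzM _).mpr (by omega)
        have h1 : ¬ n + nz (i - g) < L := by omega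
        have h2 : ¬ n + nz (i - g) < L + (g - r) := by omega
        have h3 : ¬ n + nz (i - g) < n := by omega
        have h4 : n + nz (i - g) < n + M := by omega
        simp only [hw_def]
        rw [if_neg h1, if_neg h2, if_neg h3, if_pos h4]
        rw [show n + nz (i - g) - n = nz (i - g) by omega, hnz_val (i - g)]
        have h6 := hyp (i - g) (by omega)
        rw [shift_iter] at h6
        rw [show i - g + g = i by omega] at h6
        rw [h6]
      · -- g + j ≤ i
        have h1 : ¬ n + M + (i - (g + j)) < L := by omega
        have h2 : ¬ n + M + (i - (g + j)) < L + (g - r) := by omega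
        have h3 : ¬ n + M + (i - (g + j)) < n := by omega
        have h4 : ¬ n + M + (i - (g + j)) < n + M := by omega
        simp only [hw_def]
        rw [if_neg h1, if_neg h2, if_neg h3, if_neg h4]
        rw [show g + j + (n + M + (i - (g + j)) - (n + M)) = i by omega]
    · intro m hm
      simp only [hw_def]
      split_ifs with c1 c2 c3 c4
      · -- m < L : x m = 2
        refine hmx_two m (fun i hi => hm i ?_)
        have hir : i < r := (hmxL i).mp (by omega)
        simp only [hnf_def]
        split_ifs <;> omega
      · -- impossible: m is in the s-block
        exact absurd (show nf (r + (m - L)) = m by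
          simp only [hnf_def]; split_ifs <;> omega) (hm _)
      · rfl
      · -- n ≤ m < n + M : z (m - n) = 2
        refine hnz_two (m - n) (fun t ht => ?_)
        have htj : t < j := (hnzM t).mp (by omega)
        refine hm (g + t) ?_
        simp only [hnf_def, Nat.add_sub_cancel_left]
        split_ifs <;> omega
      · -- impossible: m ≥ n + M
        exact absurd (show nf (g + j + (m - (n + M))) = m by
          simp only [hnf_def]; split_ifs <;> omega) (hm _)
  refine ⟨w, ⟨?_, ?_⟩, ?_⟩
  · -- w ∈ U
    refine hL w (fun t ht => ?_)
    have hwt : w t = x t := by simp only [hw_def]; rw [if_pos ht]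
    rw [hwt, hxcyl t ht]
  · -- w ∈ Xtilde X
    exact subset_closure (Set.mem_biUnion hyX hwXy)
  · -- shiftMap^[n] w ∈ V
    refine hM _ (fun t ht => ?_)
    rw [shift_iter]
    have h1 : ¬ t + n < L := by omega
    have h2 : ¬ t + n < L + (g - r) := by omega
    have h3 : ¬ t + n < n := by omega
    have h4 : t + n < n + M := by omega
    simp only [hw_def]
    rw [if_neg h1, if_neg h2, if_neg h3, if_pos h4]
    rw [show t + n - n = t by omega, hzcyl t ht]
end

section
/- With X a nontrivial minimal subshift of Σ₂ and X̃ ⊆ Σ₃ its extension as above, the only periodic point of (X̃, σ) is the fixed point 2^∞ = 222⋯. In particular, the periodic points of (X̃, σ) are not dense in X̃, and X̃ is not minimal. -/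
open TopologicalSpace

/-!
Let `x ∈ X̃` be periodic and not `2^∞`. Then `x` has infinitely many symbols `0, 1`, and deleting
its `2`s gives a periodic binary sequence. Since the first `L` surviving symbols of `x` are already
determined by a finite prefix of `x`, they are also the first `L` symbols of some `b ∈ X`, so the
deleted sequence lies in the closed set `X`. A minimal set containing a periodic point is its finite
orbit, contradicting that `X` is infinite. Both `emb23 ∘ b` (for `b ∈ X`) and `2^∞` lie in `X̃`,
so the periodic points are not dense and `{2^∞}` is a proper closed invariant subset.
-/

open Function Set PiNat

lemma shiftMap_iterate_apply {k : ℕ} (x : ℕ → Fin k) (j m : ℕ) :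
    shiftMap^[j] x m = x (m + j) := by
  induction j generalizing x with
  | zero => rfl
  | succ j ih => rw [iterate_succ_apply, ih]; rfl

lemma shiftMap_iterate_eq_self_iff {k n : ℕ} {x : ℕ → Fin k} :
    shiftMap^[n] x = x ↔ Periodic x n := by
  simp only [funext_iff, shiftMap_iterate_apply, Periodic]

lemma PiNat.mem_closure_iff_cylinder {E : ℕ → Type*} [∀ n, TopologicalSpace (E n)]
    [∀ n, DiscreteTopology (E n)] {S : Set (∀ n, E n)} {x : ∀ n, E n} :
    x ∈ closure S ↔ ∀ N, (S ∩ cylinder x N).Nonempty := by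
  rw [(isTopologicalBasis_cylinders E).mem_closure_iff]
  constructor
  · intro h N
    rw [inter_comm]
    exact h _ ⟨x, N, rfl⟩ (self_mem_cylinder x N)
  · rintro h _ ⟨z, N, rfl⟩ hx
    obtain ⟨y, hyS, hy⟩ := h N
    exact ⟨y, fun i hi => (hy i hi).trans (hx i hi), hyS⟩

lemma IsMinimalSet.finite_of_isPeriodicPt {α : Type*} [TopologicalSpace α] [T1Space α]
    {f : α → α} {A : Set α} (hA : IsMinimalSet f A) {x : α} (hx : x ∈ A) {n : ℕ} (hn : 0 < n)
    (hper : IsPeriodicPt f n x) : A.Finite := by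
  set orbit := range fun j => f^[j] x
  have horbit_finite : orbit.Finite :=
    ((finite_Iio n).image fun j => f^[j] x).subset <| by
      rintro _ ⟨j, rfl⟩
      exact ⟨j % n, Nat.mod_lt j hn, hper.iterate_mod_apply j⟩
  have horbit_invariant : MapsTo f orbit orbit := by
    rintro _ ⟨j, rfl⟩
    exact ⟨j + 1, iterate_succ_apply' f j x⟩
  have horbit_sub : orbit ⊆ A := range_subset_iff.2 fun j => hA.2.2.1.iterate j hx
  rw [← hA.2.2.2 orbit horbit_sub ⟨x, 0, rfl⟩ horbit_finite.isClosed horbit_invariant]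
  exact horbit_finite

namespace Nat

variable {p : ℕ → Prop} {n : ℕ}

lemma infinite_of_periodic (hp : Periodic p n) (hn : 0 < n) {m : ℕ} (hm : p m) :
    {k | p k}.Infinite := by
  refine infinite_of_forall_exists_gt fun a => ⟨m + (a + 1) * n, ?_, ?_⟩
  · exact cast (hp.nat_mul (a + 1) m).symm hm
  · nlinarith

variable [DecidablePred p]

lemma count_add_of_periodic (hp : Periodic p n) (m : ℕ) :
    count p (m + n) = count p m + count p n := by
  induction m with
  | zero => simp
  | succ m ih =>
    rw [Nat.add_right_comm, count_succ, ih, count_succ]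
    simp only [hp m]
    omega

lemma count_pos_of_periodic (hp : Periodic p n) (hn : 0 < n) {m : ℕ} (hm : p m) :
    0 < count p n := by
  have hmod : p (m % n) := (hp.map_mod_nat m).symm ▸ hm
  exact (Nat.zero_le _).trans_lt <|
    (count_lt_count_succ_iff.2 hmod).trans_le (count_monotone p (Nat.mod_lt m hn))

lemma nth_add_count_of_periodic (hp : Periodic p n) (hinf : {k | p k}.Infinite) (i : ℕ) :
    nth p (i + count p n) = nth p i + n := by
  have hpi : p (nth p i + n) := (hp _).symm ▸ nth_mem_of_infinite hinf i
  rw [← nth_count hpi, count_add_of_periodic hp, count_nth_of_infinite hinf]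

end Nat

lemma emb23_ne_two (b : Fin 2) : emb23 b ≠ 2 := by
  fin_cases b <;> decide

lemma ofNat_val_emb23 (b : Fin 2) : Fin.ofNat 2 (emb23 b : ℕ) = b := by
  fin_cases b <;> rfl

/-- Only meaningful when `x` has infinitely many symbols other than `2`. -/
noncomputable def eraseTwos (x : ℕ → Fin 3) : ℕ → Fin 2 :=
  fun i => Fin.ofNat 2 (x (Nat.nth (fun m => x m ≠ 2) i) : ℕ)

lemma eraseTwos_of_mem_Xb {b : ℕ → Fin 2} {x : ℕ → Fin 3} (hx : x ∈ Xb b) : eraseTwos x = b := by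
  obtain ⟨n, hn, hval, hoff⟩ := hx
  have hrange : range n = {m | x m ≠ 2} := by
    ext m
    constructor
    · rintro ⟨i, rfl⟩
      show x (n i) ≠ 2
      rw [hval]
      exact emb23_ne_two (b i)
    · intro hm
      by_contra hnot
      exact hm (hoff m fun i hi => hnot ⟨i, hi⟩)
  have hinf : {m | x m ≠ 2}.Infinite := hrange ▸ infinite_range_of_injective hn.injective
  have hnth : Nat.nth (fun m => x m ≠ 2) = n :=
    (Nat.nth_strictMono hinf).range_inj hn |>.mp (by rw [Nat.range_nth_of_infinite hinf, hrange])
  funext i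
  simp only [eraseTwos, hnth, hval, ofNat_val_emb23]

lemma eraseTwos_eq_of_eqOn_lt {x y : ℕ → Fin 3} {N : ℕ} (hyx : ∀ j < N, y j = x j)
    (hinf : {m | x m ≠ 2}.Infinite) {i : ℕ} (hi : Nat.nth (fun m => x m ≠ 2) i < N) :
    eraseTwos y i = eraseTwos x i := by
  set k := Nat.nth (fun m => x m ≠ 2) i
  have hyk : y k ≠ 2 := hyx k hi ▸ Nat.nth_mem_of_infinite hinf i
  have hcount : Nat.count (fun m => y m ≠ 2) k = i := by
    rw [Nat.count_eq_card_filter_range,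
      Finset.filter_congr fun j hj => by rw [hyx j ((Finset.mem_range.1 hj).trans hi)],
      ← Nat.count_eq_card_filter_range, Nat.count_nth_of_infinite hinf]
  have hnth : Nat.nth (fun m => y m ≠ 2) i = k := hcount ▸ Nat.nth_count hyk
  simp only [eraseTwos, hnth, hyx k hi, k]

lemma eraseTwos_mem_of_mem_Xtilde {X : Set (ℕ → Fin 2)} (hXc : IsClosed X) {x : ℕ → Fin 3}
    (hx : x ∈ Xtilde X) (hinf : {m | x m ≠ 2}.Infinite) : eraseTwos x ∈ X := by
  rw [← hXc.closure_eq, mem_closure_iff_cylinder]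
  intro L
  obtain ⟨y, hy, hyx⟩ := mem_closure_iff_cylinder.1 hx (Nat.nth (fun m => x m ≠ 2) L + 1)
  obtain ⟨b, hbX, hyb⟩ := mem_iUnion₂.1 hy
  refine ⟨b, hbX, fun i hi => ?_⟩
  rw [← eraseTwos_of_mem_Xb hyb]
  exact eraseTwos_eq_of_eqOn_lt hyx hinf
    (Nat.lt_succ_of_le ((Nat.nth_strictMono hinf).monotone hi.le))

lemma periodic_eraseTwos {x : ℕ → Fin 3} {n : ℕ} (hx : Periodic x n)
    (hinf : {m | x m ≠ 2}.Infinite) :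
    Periodic (eraseTwos x) (Nat.count (fun m => x m ≠ 2) n) := fun i => by
  have hp : Periodic (fun m => x m ≠ 2) n := hx.comp (· ≠ 2)
  simp only [eraseTwos, Nat.nth_add_count_of_periodic hp hinf, hx _]

lemma eq_two_of_mem_Xtilde_of_periodic {X : Set (ℕ → Fin 2)} (hXinf : X.Infinite)
    (hXmin : IsMinimalSet shiftMap X) {x : ℕ → Fin 3} (hx : x ∈ Xtilde X) {n : ℕ} (hn : 1 ≤ n)
    (hper : shiftMap^[n] x = x) : x = fun _ => 2 := by
  by_contra hne
  obtain ⟨m, hm⟩ : ∃ m, x m ≠ 2 := by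
    by_contra! h
    exact hne (funext h)
  have hxper : Periodic x n := shiftMap_iterate_eq_self_iff.1 hper
  have hp : Periodic (fun m => x m ≠ 2) n := hxper.comp (· ≠ 2)
  have hinf := Nat.infinite_of_periodic hp hn hm
  have herase_per : IsPeriodicPt shiftMap _ (eraseTwos x) :=
    shiftMap_iterate_eq_self_iff.2 (periodic_eraseTwos hxper hinf)
  exact hXinf <| hXmin.finite_of_isPeriodicPt (eraseTwos_mem_of_mem_Xtilde hXmin.2.1 hx hinf)
    (Nat.count_pos_of_periodic hp hn hm) herase_per

lemma comp_emb23_mem_Xtilde {X : Set (ℕ → Fin 2)} {b : ℕ → Fin 2} (hb : b ∈ X) :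
    emb23 ∘ b ∈ Xtilde X :=
  subset_closure <| mem_biUnion hb ⟨id, strictMono_id, fun _ => rfl, fun m hm => (hm m rfl).elim⟩

lemma const_two_mem_Xtilde {X : Set (ℕ → Fin 2)} (hX : X.Nonempty) :
    (fun _ => (2 : Fin 3)) ∈ Xtilde X := by
  obtain ⟨b, hb⟩ := hX
  refine mem_closure_iff_cylinder.2 fun N =>
    ⟨fun m => if m < N then 2 else emb23 (b (m - N)), mem_biUnion hb ?_, fun i hi => if_pos hi⟩
  refine ⟨(N + ·), fun i j hij => Nat.add_lt_add_left hij N, fun i => ?_, fun m hm => ?_⟩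
  · simp
  · have hmN : m < N := by
      by_contra h
      exact hm (m - N) (show N + (m - N) = m by omega)
    simp [hmN]

theorem Xtilde_unique_periodic_general (X : Set (ℕ → Fin 2))
    (hXinf : X.Infinite) (hXmin : IsMinimalSet shiftMap X) :
    (∀ x ∈ Xtilde X, (∃ n : ℕ, 1 ≤ n ∧ shiftMap^[n] x = x) →
        x = fun _ => (2 : Fin 3)) ∧
    ¬ (Xtilde X ⊆ closure {x ∈ Xtilde X | ∃ n : ℕ, 1 ≤ n ∧ shiftMap^[n] x = x}) ∧
    ¬ IsMinimalSet shiftMap (Xtilde X) := by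
  have hperiodic : ∀ x ∈ Xtilde X, (∃ n : ℕ, 1 ≤ n ∧ shiftMap^[n] x = x) → x = fun _ => 2 :=
    fun x hx ⟨n, hn, hper⟩ => eq_two_of_mem_Xtilde_of_periodic hXinf hXmin hx hn hper
  obtain ⟨b, hb⟩ := hXmin.1
  have hbX := comp_emb23_mem_Xtilde hb
  have hb_ne : emb23 ∘ b ≠ fun _ => 2 := fun h => emb23_ne_two (b 0) (congrFun h 0)
  refine ⟨hperiodic, fun hdense => hb_ne ?_, fun hmin => hb_ne ?_⟩
  · have hclosure : closure {x ∈ Xtilde X | ∃ n : ℕ, 1 ≤ n ∧ shiftMap^[n] x = x}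
        ⊆ {fun _ => 2} :=
      closure_minimal (fun x hx => hperiodic x hx.1 hx.2) isClosed_singleton
    exact hclosure (hdense hbX)
  · have hfixed : MapsTo shiftMap {fun _ => (2 : Fin 3)} {fun _ => 2} := by
      rintro _ rfl
      rfl
    have hsingleton := hmin.2.2.2 _ (singleton_subset_iff.2 (const_two_mem_Xtilde ⟨b, hb⟩))
      (singleton_nonempty _) isClosed_singleton hfixed
    exact (hsingleton ▸ hbX : emb23 ∘ b ∈ ({fun _ => 2} : Set (ℕ → Fin 3)))

/-- The only periodic point of the extension of a nontrivial minimal subshift is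
the fixed point 2^infty; hence periodic points are not dense and the extension is
not minimal. -/
theorem Xtilde_unique_periodic (X : Set (ℕ → Fin 2))
    (hXc : IsClosed X) (hXi : Set.MapsTo shiftMap X X)
    (hXinf : X.Infinite) (hXmin : IsMinimalSet shiftMap X) :
    (∀ x ∈ Xtilde X, (∃ n : ℕ, 1 ≤ n ∧ shiftMap^[n] x = x) →
        x = fun _ => (2 : Fin 3)) ∧
    ¬ (Xtilde X ⊆ closure {x ∈ Xtilde X | ∃ n : ℕ, 1 ≤ n ∧ shiftMap^[n] x = x}) ∧
    ¬ IsMinimalSet shiftMap (Xtilde X) :=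
  Xtilde_unique_periodic_general X hXinf hXmin
end

section
/- There exists a compact metric space Y and a continuous map g : Y → Y such that the induced hyperspace map ḡ on K(Y) has a dense set of periodic points, while the set of periodic points of g is not dense in Y. Hence density of periodic points in the hyperspace system does not imply density of periodic points in the base system. -/
open TopologicalSpace

namespace OdoAux

/-- The Cantor space `ℕ → Bool`. -/
abbrev Y : Type := ℕ → Bool

noncomputable instance : MetricSpace Y :=
  PiNat.metricSpaceOfDiscreteUniformity fun _ => rfl

/-- The binary odometer (adding machine). -/
def g (x : Y) : Y := fun n => if ∀ m < n, x m = true then !(x n) else x n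

/-- Inverse of the odometer. -/
def g' (x : Y) : Y := fun n => if ∀ m < n, x m = false then !(x n) else x n

lemma cond_iff (x : Y) (n : ℕ) :
    (∀ m < n, g' x m = true) ↔ (∀ m < n, x m = false) := by
  constructor
  · intro h
    intro m
    induction m using Nat.strong_induction_on with
    | _ m ih =>
      intro hm
      have h1 := h m hm
      unfold g' at h1
      rw [if_pos (fun j hj => ih j hj (hj.trans hm))] at h1
      simpa using h1
  · intro h m hm
    unfold g'
    rw [if_pos (fun j hj => h j (hj.trans hm))]
    simp [h m hm]

lemma cond_iff' (x : Y) (n : ℕ) :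
    (∀ m < n, g x m = false) ↔ (∀ m < n, x m = true) := by
  constructor
  · intro h
    intro m
    induction m using Nat.strong_induction_on with
    | _ m ih =>
      intro hm
      have h1 := h m hm
      unfold g at h1
      rw [if_pos (fun j hj => ih j hj (hj.trans hm))] at h1
      simpa using h1
  · intro h m hm
    unfold g
    rw [if_pos (fun j hj => h j (hj.trans hm))]
    simp [h m hm]

lemma gg' (x : Y) : g (g' x) = x := by
  funext n
  unfold g
  by_cases hc : ∀ m < n, x m = false
  · rw [if_pos ((cond_iff x n).2 hc)]
    unfold g'
    rw [if_pos hc]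
    simp
  · rw [if_neg (fun h => hc ((cond_iff x n).1 h))]
    unfold g'
    rw [if_neg hc]

lemma g_cont : Continuous g := by
  apply continuous_pi
  intro n
  have key : (fun x : Y => g x n) =
      (fun v : Fin (n+1) → Bool =>
        if ∀ m : Fin (n+1), m.1 < n → v m = true then !(v ⟨n, n.lt_succ_self⟩)
        else v ⟨n, n.lt_succ_self⟩) ∘ (fun x (m : Fin (n+1)) => x m.1) := by
    funext x
    have e : (∀ m : Fin (n+1), m.1 < n → x m.1 = true) ↔ (∀ m < n, x m = true) := by
      constructor
      · intro h m hm; exact h ⟨m, hm.trans n.lt_succ_self⟩ hm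
      · intro h m hm; exact h m.1 hm
    simp only [Function.comp]
    unfold g
    rw [if_congr e.symm rfl rfl]
  rw [show (fun x : Y => g x n) = _ from key]
  exact Continuous.comp continuous_of_discreteTopology
    (continuous_pi fun m => continuous_apply m.1)

/-- Key lemma: `g^[2^k]` acts on coordinates as "adding `2^k`". -/
lemma g_iter (k : ℕ) : ∀ (x : Y) (n : ℕ),
    g^[2^k] x n = if n < k then x n
      else if ∀ m < n, k ≤ m → x m = true then !(x n) else x n := by
  induction k with
  | zero =>
    intro x n
    have e : (∀ m < n, 0 ≤ m → x m = true) ↔ (∀ m < n, x m = true) := by simp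
    simp only [pow_zero, Function.iterate_one, Nat.not_lt_zero, if_false]
    rw [if_congr e rfl rfl]
    rfl
  | succ k ih =>
    intro x n
    have h2 : (2:ℕ)^(k+1) = 2^k + 2^k := by ring
    rw [h2, Function.iterate_add_apply, ih]
    rcases lt_trichotomy n k with hn | hn | hn
    · rw [if_pos hn, if_pos (hn.trans k.lt_succ_self), ih, if_pos hn]
    · subst hn
      rw [if_neg (lt_irrefl n), if_pos n.lt_succ_self]
      rw [if_pos (fun m hm hm' => absurd hm' (not_le.2 hm))]
      rw [ih, if_neg (lt_irrefl n)]
      rw [if_pos (fun m hm hm' => absurd hm' (not_le.2 hm))]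
      simp
    · rw [if_neg (not_lt.2 hn.le), if_neg (by omega : ¬ n < k+1)]
      by_cases hxk : x k = true
      · have hyk : (g^[2^k] x) k = !(x k) := by
          rw [ih, if_neg (lt_irrefl k), if_pos (fun m hm hm' => absurd hm' (not_le.2 hm))]
        have hCy : ¬ ∀ m < n, k ≤ m → (g^[2^k] x) m = true := by
          intro h
          have := h k hn le_rfl
          rw [hyk, hxk] at this
          simp at this
        rw [if_neg hCy, ih, if_neg (not_lt.2 hn.le)]
        have e : (∀ m < n, k ≤ m → x m = true) ↔ (∀ m < n, k+1 ≤ m → x m = true) := by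
          constructor
          · intro h m hm hm'; exact h m hm (by omega)
          · intro h m hm hm'
            rcases eq_or_lt_of_le hm' with h1 | h1
            · exact h1 ▸ hxk
            · exact h m hm h1
        rw [if_congr e rfl rfl]
      · have hxk' : x k = false := by simpa using hxk
        have hym : ∀ m, k < m → (g^[2^k] x) m = x m := by
          intro m hm
          rw [ih, if_neg (not_lt.2 hm.le), if_neg]
          intro h
          have := h k hm le_rfl
          rw [hxk'] at this
          simp at this
        have hyk : (g^[2^k] x) k = true := by
          rw [ih, if_neg (lt_irrefl k), if_pos (fun m hm hm' => absurd hm' (not_le.2 hm)), hxk']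
          rfl
        have e : (∀ m < n, k ≤ m → (g^[2^k] x) m = true) ↔ (∀ m < n, k+1 ≤ m → x m = true) := by
          constructor
          · intro h m hm hm'
            have := h m hm (by omega)
            rwa [hym m (by omega)] at this
          · intro h m hm hm'
            rcases eq_or_lt_of_le hm' with h1 | h1
            · exact h1 ▸ hyk
            · rw [hym m h1]; exact h m hm h1
        rw [hym n hn, if_congr e rfl rfl]

lemma g_iter_low {k n : ℕ} (h : n < k) (x : Y) : g^[2^k] x n = x n := by
  rw [g_iter, if_pos h]

lemma g_flip (a : ℕ) (x : Y) : g^[2^a] x a = !(x a) := by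
  rw [g_iter, if_neg (lt_irrefl a), if_pos (fun m hm hm' => absurd hm' (not_le.2 hm))]

lemma g_flip_mul (a j : ℕ) (x : Y) :
    g^[2^a * j] x a = if j % 2 = 1 then !(x a) else x a := by
  induction j with
  | zero => simp
  | succ j ih =>
    have e : 2^a * (j+1) = 2^a + 2^a * j := by ring
    rw [e, Function.iterate_add_apply, g_flip, ih]
    by_cases h : j % 2 = 1
    · rw [if_pos h, if_neg (by omega)]; simp
    · rw [if_neg h, if_pos (by omega)]

lemma no_periodic (x : Y) : ¬ ∃ n ≥ 1, g^[n] x = x := by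
  rintro ⟨n, hn, hfix⟩
  obtain ⟨a, b, hb, hab⟩ :=
    Nat.exists_eq_pow_mul_and_not_dvd (show n ≠ 0 by omega) 2 (by norm_num)
  have hb1 : b % 2 = 1 := by omega
  have h2 : x a = !(x a) := by
    conv_lhs => rw [← hfix, hab, g_flip_mul, if_pos hb1]
  simp at h2

lemma dist_le_of_agree {x y : Y} {k : ℕ} (h : ∀ m < k, y m = x m) :
    dist y x ≤ (1/2 : ℝ)^k :=
  PiNat.mem_cylinder_iff_dist_le.1 (PiNat.mem_cylinder_iff.2 h)

lemma barMap_iter {X : Type*} [TopologicalSpace X] (f : X → X) (hf : Continuous f)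
    (n : ℕ) (A : NonemptyCompacts X) :
    ((barMap f hf)^[n] A : Set X) = f^[n] '' (A : Set X) := by
  induction n with
  | zero => simp
  | succ n ih =>
    rw [Function.iterate_succ_apply', Function.iterate_succ']
    show f '' ((barMap f hf)^[n] A : Set X) = _
    rw [ih, Set.image_comp]

lemma dense_hyper : Dense (Periodics (barMap g g_cont)) := by
  rw [Metric.dense_iff]
  intro A r hr
  obtain ⟨k, hk⟩ := exists_pow_lt_of_lt_one hr (by norm_num : (1:ℝ)/2 < 1)
  set π : Y → (Fin k → Bool) := fun x m => x m.1 with hπdef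
  have hπ : Continuous π := continuous_pi fun m => continuous_apply m.1
  set Bs : Set Y := π ⁻¹' (π '' (A : Set Y)) with hBsdef
  have hmem : ∀ y : Y, y ∈ Bs ↔ ∃ x ∈ (A : Set Y), ∀ m < k, y m = x m := by
    intro y
    constructor
    · rintro ⟨x, hx, hxy⟩
      exact ⟨x, hx, fun m hm => (congrFun hxy ⟨m, hm⟩).symm⟩
    · rintro ⟨x, hx, h⟩
      exact ⟨x, hx, funext fun m => (h m.1 m.2).symm⟩
  have hAB : (A : Set Y) ⊆ Bs := fun x hx => ⟨x, hx, rfl⟩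
  have hBc : IsCompact Bs := ((isClosed_discrete _).preimage hπ).isCompact
  refine ⟨⟨⟨Bs, hBc⟩, A.nonempty.mono hAB⟩, Set.mem_inter ?_ ?_⟩
  · rw [Metric.mem_ball, Metric.NonemptyCompacts.dist_eq]
    refine lt_of_le_of_lt (Metric.hausdorffDist_le_of_mem_dist (by positivity) ?_ ?_) hk
    · intro y hy
      obtain ⟨x, hx, h⟩ := (hmem y).1 hy
      exact ⟨x, hx, dist_le_of_agree h⟩
    · intro x hx
      exact ⟨x, hAB hx, by simp⟩
  · refine ⟨2^k, Nat.one_le_two_pow, ?_⟩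
    apply NonemptyCompacts.ext
    rw [barMap_iter]
    show g^[2^k] '' Bs = Bs
    apply Set.Subset.antisymm
    · rintro _ ⟨y, hy, rfl⟩
      obtain ⟨x, hx, h⟩ := (hmem y).1 hy
      exact (hmem _).2 ⟨x, hx, fun m hm => (g_iter_low hm y).trans (h m hm)⟩
    · intro y hy
      refine ⟨(g')^[2^k] y, ?_, Function.LeftInverse.iterate gg' (2^k) y⟩
      obtain ⟨x, hx, h⟩ := (hmem y).1 hy
      have hgy : g^[2^k] ((g')^[2^k] y) = y := Function.LeftInverse.iterate gg' (2^k) y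
      refine (hmem _).2 ⟨x, hx, fun m hm => ?_⟩
      have h2 := g_iter_low hm ((g')^[2^k] y)
      rw [hgy] at h2
      exact h2.symm.trans (h m hm)

lemma not_dense_base : ¬ Dense (Periodics g) := by
  intro hd
  obtain ⟨x, hx⟩ := hd.nonempty
  exact no_periodic x hx

end OdoAux

/-- There is a compact system whose hyperspace map has dense periodic points
while the base map does not. -/
theorem exists_hyper_densePeriodic_base_not :
    ∃ (Y : Type) (_ : MetricSpace Y) (_ : CompactSpace Y)
      (g : Y → Y) (hg : Continuous g),
      Dense (Periodics (barMap g hg)) ∧ ¬ Dense (Periodics g) := by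
  exact ⟨OdoAux.Y, inferInstance, inferInstance, OdoAux.g, OdoAux.g_cont,
    OdoAux.dense_hyper, OdoAux.not_dense_base⟩
end
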